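/- Let B be an n×n real symmetric positive definite matrix, R an m×m real symmetric positive definite matrix, H an m×n real matrix, and K = B Hᵀ (H B Hᵀ + R)⁻¹ the Kalman gain. Let (Ω, 𝔽, ℙ) be a probability space and ε_b : Ω → ℝⁿ, ε_y : Ω → ℝᵐ random vectors such that all products among their components are integrable, each component has mean zero, ∫ (ε_b)_i (ε_b)_j dℙ = B_{ij}, ∫ (ε_y)_k (ε_y)_l dℙ = R_{kl}, and ∫ (ε_b)_i (ε_y)_k dℙ = 0. With x_b = x_t + ε_b, y = H x_t − ε_y, and analysis x_a = x_b + K(y − H x_b), the expected observation part of the cost satisfies ∫ (y − H x_a)ᵀ R⁻¹ (y − H x_a) dℙ = Tr(I_m − H K), i.e., E[2 J_o(x_a)] = Tr(I_m − H K). -/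

import Mathlib

/-!
The residual is `y - H x_a = -(I - H K) d` for the innovation `d = ε_y + H ε_b`, the image of
the joint error `(ε_b, ε_y)` under `[H I]`. Since the errors are uncorrelated, the joint error
has second moment `diag(B, R)`, so `d` has second moment `S = H B Hᵀ + R`, and the expected
quadratic form equals `Tr(R⁻¹ (I - H K) S (I - H K)ᵀ)`. The Kalman gain is exactly the gain with
`(I - H K) S = R`, which leaves `Tr((I - H K)ᵀ)`.
-/

open Matrix MeasureTheory

namespace Matrix

section CommSemiring

variable {α : Type*} [CommSemiring α] {ι κ ι' κ' : Type*} [Fintype ι] [Fintype κ]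

theorem dotProduct_mulVec_eq_sum_sum (v : ι → α) (A : Matrix ι κ α) (w : κ → α) :
    v ⬝ᵥ A *ᵥ w = ∑ i, ∑ j, A i j * (v i * w j) := by
  simp only [dotProduct, mulVec, Finset.mul_sum]
  exact Finset.sum_congr rfl fun i _ => Finset.sum_congr rfl fun j _ => by ring

theorem mulVec_apply_mul_mulVec_apply (A : Matrix ι' ι α) (B : Matrix κ' κ α) (v : ι → α)
    (w : κ → α) (i : ι') (j : κ') :
    (A *ᵥ v) i * (B *ᵥ w) j = v ⬝ᵥ vecMulVec (A i) (B j) *ᵥ w := by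
  simp only [mulVec, dotProduct, vecMulVec_apply]
  rw [Finset.sum_mul_sum]
  simp only [Finset.mul_sum]
  exact Finset.sum_congr rfl fun k _ => Finset.sum_congr rfl fun l _ => by ring

end CommSemiring

section CommRing

variable {α : Type*} [CommRing α] {n m : Type*} [Fintype n] [Fintype m] [DecidableEq m]

noncomputable def kalmanGain (B : Matrix n n α) (H : Matrix m n α) (R : Matrix m m α) :
    Matrix n m α :=
  B * Hᵀ * (H * B * Hᵀ + R)⁻¹

theorem one_sub_mul_kalmanGain_mul {B : Matrix n n α} {H : Matrix m n α} {R : Matrix m m α}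
    (hS : IsUnit (H * B * Hᵀ + R)) :
    (1 - H * kalmanGain B H R) * (H * B * Hᵀ + R) = R := by
  have hKS : kalmanGain B H R * (H * B * Hᵀ + R) = B * Hᵀ :=
    nonsing_inv_mul_cancel_right _ _ ((isUnit_iff_isUnit_det _).1 hS)
  rw [Matrix.sub_mul, Matrix.one_mul, Matrix.mul_assoc H (kalmanGain B H R), hKS,
    ← Matrix.mul_assoc]
  abel

theorem sub_mulVec_add_mulVec_sub (H : Matrix m n α) (K : Matrix n m α) (y : m → α)
    (x : n → α) : y - H *ᵥ (x + K *ᵥ (y - H *ᵥ x)) = (1 - H * K) *ᵥ (y - H *ᵥ x) := by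
  rw [mulVec_add, sub_mulVec, one_mulVec, ← mulVec_mulVec]
  abel

end CommRing

end Matrix

namespace MeasureTheory

variable {Ω : Type*} [MeasurableSpace Ω] {ι κ ι' κ' : Type*}

def ProductsIntegrable (μ : Measure Ω) (X : Ω → ι → ℝ) (Y : Ω → κ → ℝ) : Prop :=
  ∀ i j, Integrable (fun ω => X ω i * Y ω j) μ

noncomputable def crossMoment (μ : Measure Ω) (X : Ω → ι → ℝ) (Y : Ω → κ → ℝ) :
    Matrix ι κ ℝ :=
  of fun i j => ∫ ω, X ω i * Y ω j ∂μ

variable {μ : Measure Ω} {X : Ω → ι → ℝ} {Y : Ω → κ → ℝ}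

theorem ProductsIntegrable.swap (h : ProductsIntegrable μ X Y) : ProductsIntegrable μ Y X :=
  fun j i => by simpa only [mul_comm] using h i j

theorem transpose_crossMoment : (crossMoment μ X Y)ᵀ = crossMoment μ Y X := by
  ext j i
  simp only [transpose_apply, crossMoment, of_apply, mul_comm]

theorem ProductsIntegrable.sumElim {X₁ : Ω → ι → ℝ} {X₂ : Ω → ι' → ℝ}
    {Y₁ : Ω → κ → ℝ} {Y₂ : Ω → κ' → ℝ}
    (h₁₁ : ProductsIntegrable μ X₁ Y₁) (h₁₂ : ProductsIntegrable μ X₁ Y₂)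
    (h₂₁ : ProductsIntegrable μ X₂ Y₁) (h₂₂ : ProductsIntegrable μ X₂ Y₂) :
    ProductsIntegrable μ (fun ω => Sum.elim (X₁ ω) (X₂ ω)) (fun ω => Sum.elim (Y₁ ω) (Y₂ ω))
  | .inl i, .inl j => h₁₁ i j
  | .inl i, .inr j => h₁₂ i j
  | .inr i, .inl j => h₂₁ i j
  | .inr i, .inr j => h₂₂ i j

theorem crossMoment_sumElim (X₁ : Ω → ι → ℝ) (X₂ : Ω → ι' → ℝ)
    (Y₁ : Ω → κ → ℝ) (Y₂ : Ω → κ' → ℝ) :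
    crossMoment μ (fun ω => Sum.elim (X₁ ω) (X₂ ω)) (fun ω => Sum.elim (Y₁ ω) (Y₂ ω)) =
      fromBlocks (crossMoment μ X₁ Y₁) (crossMoment μ X₁ Y₂)
        (crossMoment μ X₂ Y₁) (crossMoment μ X₂ Y₂) := by
  ext (i | i) (j | j) <;> rfl

variable [Fintype ι] [Fintype κ]

theorem ProductsIntegrable.integrable_dotProduct_mulVec (h : ProductsIntegrable μ X Y)
    (A : Matrix ι κ ℝ) : Integrable (fun ω => X ω ⬝ᵥ A *ᵥ Y ω) μ := by
  simp_rw [dotProduct_mulVec_eq_sum_sum]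
  exact integrable_finsetSum _ fun i _ => integrable_finsetSum _ fun j _ => (h i j).const_mul _

theorem ProductsIntegrable.integral_dotProduct_mulVec (h : ProductsIntegrable μ X Y)
    (A : Matrix ι κ ℝ) :
    ∫ ω, X ω ⬝ᵥ A *ᵥ Y ω ∂μ = ∑ i, ∑ j, A i j * crossMoment μ X Y i j := by
  simp_rw [dotProduct_mulVec_eq_sum_sum]
  rw [integral_finsetSum (f := fun i ω => ∑ j, A i j * (X ω i * Y ω j)) _
    fun i _ => integrable_finsetSum _ fun j _ => (h i j).const_mul _]
  refine Finset.sum_congr rfl fun i _ => ?_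
  rw [integral_finsetSum (f := fun j ω => A i j * (X ω i * Y ω j)) _
    fun j _ => (h i j).const_mul _]
  simp only [integral_const_mul, crossMoment, of_apply]

theorem ProductsIntegrable.integral_dotProduct_mulVec_eq_trace (h : ProductsIntegrable μ X Y)
    (A : Matrix ι κ ℝ) : ∫ ω, X ω ⬝ᵥ A *ᵥ Y ω ∂μ = trace (A * crossMoment μ Y X) := by
  rw [h.integral_dotProduct_mulVec, ← transpose_crossMoment]
  simp only [trace, diag, mul_apply, transpose_apply]

theorem ProductsIntegrable.mulVec (h : ProductsIntegrable μ X Y) (A : Matrix ι' ι ℝ)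
    (B : Matrix κ' κ ℝ) :
    ProductsIntegrable μ (fun ω => A *ᵥ X ω) (fun ω => B *ᵥ Y ω) := fun i j => by
  simpa only [mulVec_apply_mul_mulVec_apply] using h.integrable_dotProduct_mulVec _

theorem ProductsIntegrable.crossMoment_mulVec (h : ProductsIntegrable μ X Y)
    (A : Matrix ι' ι ℝ) (B : Matrix κ' κ ℝ) :
    crossMoment μ (fun ω => A *ᵥ X ω) (fun ω => B *ᵥ Y ω) = A * crossMoment μ X Y * Bᵀ := by
  ext i j
  change ∫ ω, (A *ᵥ X ω) i * (B *ᵥ Y ω) j ∂μ = _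
  simp_rw [mulVec_apply_mul_mulVec_apply]
  rw [h.integral_dotProduct_mulVec]
  simp only [mul_apply, vecMulVec_apply, transpose_apply, Finset.sum_mul]
  rw [Finset.sum_comm]
  exact Finset.sum_congr rfl fun k _ => Finset.sum_congr rfl fun l _ => by ring

end MeasureTheory

theorem expected_observation_cost_eq_trace_ImHK_general {n m : ℕ} {Ω : Type*}
    [MeasurableSpace Ω] (ℙ : Measure Ω)
    (B : Matrix (Fin n) (Fin n) ℝ) (R : Matrix (Fin m) (Fin m) ℝ)
    (H : Matrix (Fin m) (Fin n) ℝ)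
    (hB : B.PosDef) (hR : R.PosDef)
    (K : Matrix (Fin n) (Fin m) ℝ)
    (hK : K = B * Hᵀ * (H * B * Hᵀ + R)⁻¹)
    (xt : Fin n → ℝ)
    (εb : Ω → (Fin n → ℝ)) (εy : Ω → (Fin m → ℝ))
    (hbb : ∀ i j, Integrable (fun ω => εb ω i * εb ω j) ℙ)
    (hyy : ∀ k l, Integrable (fun ω => εy ω k * εy ω l) ℙ)
    (hby : ∀ i k, Integrable (fun ω => εb ω i * εy ω k) ℙ)
    (hBcov : ∀ i j, ∫ ω, εb ω i * εb ω j ∂ℙ = B i j)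
    (hRcov : ∀ k l, ∫ ω, εy ω k * εy ω l ∂ℙ = R k l)
    (hcross : ∀ i k, ∫ ω, εb ω i * εy ω k ∂ℙ = 0)
    (xb : Ω → (Fin n → ℝ)) (hxb : ∀ ω, xb ω = xt + εb ω)
    (y : Ω → (Fin m → ℝ)) (hy : ∀ ω, y ω = H *ᵥ xt - εy ω)
    (xa : Ω → (Fin n → ℝ))
    (hxa : ∀ ω, xa ω = xb ω + K *ᵥ (y ω - H *ᵥ xb ω)) :
    ∫ ω, (y ω - H *ᵥ xa ω) ⬝ᵥ R⁻¹ *ᵥ (y ω - H *ᵥ xa ω) ∂ℙ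
      = ((1 : Matrix (Fin m) (Fin m) ℝ) - H * K).trace := by
  have hS : (H * B * Hᵀ + R).PosDef := by
    simpa using PosDef.posSemidef_add (hB.posSemidef.mul_mul_conjTranspose_same H) hR
  have hMS : (1 - H * K) * (H * B * Hᵀ + R) = R := by
    rw [hK]
    exact one_sub_mul_kalmanGain_mul hS.isUnit
  set M := 1 - H * K
  set G := fromCols H (1 : Matrix (Fin m) (Fin m) ℝ)
  set z : Ω → Fin n ⊕ Fin m → ℝ := fun ω => Sum.elim (εb ω) (εy ω)
  have hz : ProductsIntegrable ℙ z z := .sumElim hbb hby (ProductsIntegrable.swap hby) hyy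
  have hzz : crossMoment ℙ z z = fromBlocks B 0 0 R := by
    have hεbεy : crossMoment ℙ εb εy = 0 := Matrix.ext hcross
    rw [crossMoment_sumElim, ← transpose_crossMoment (X := εb) (Y := εy), hεbεy, transpose_zero,
      show crossMoment ℙ εb εb = B from Matrix.ext hBcov,
      show crossMoment ℙ εy εy = R from Matrix.ext hRcov]
  have hGzz : G * fromBlocks B 0 0 R * Gᵀ = H * B * Hᵀ + R := by
    simp [G, fromCols_mul_fromBlocks, transpose_fromCols, fromCols_mul_fromRows]
  have hres : ∀ ω, y ω - H *ᵥ xa ω = (-(M * G)) *ᵥ z ω := fun ω => by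
    have hinnov : y ω - H *ᵥ xb ω = -(G *ᵥ z ω) := by
      rw [hxb, hy, fromCols_mulVec_sumElim, mulVec_add, one_mulVec]
      abel
    rw [hxa, sub_mulVec_add_mulVec_sub, hinnov, mulVec_neg, neg_mulVec, mulVec_mulVec]
  calc ∫ ω, (y ω - H *ᵥ xa ω) ⬝ᵥ R⁻¹ *ᵥ (y ω - H *ᵥ xa ω) ∂ℙ
      = ∫ ω, ((-(M * G)) *ᵥ z ω) ⬝ᵥ R⁻¹ *ᵥ ((-(M * G)) *ᵥ z ω) ∂ℙ := by simp_rw [hres]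
    _ = trace (R⁻¹ * (M * G * fromBlocks B 0 0 R * (M * G)ᵀ)) := by
      rw [(hz.mulVec _ _).integral_dotProduct_mulVec_eq_trace, hz.crossMoment_mulVec, hzz]
      simp only [transpose_neg, Matrix.neg_mul, Matrix.mul_neg, neg_neg]
    _ = trace (R⁻¹ * (M * (H * B * Hᵀ + R) * Mᵀ)) := by
      rw [← hGzz, transpose_mul]
      simp only [Matrix.mul_assoc]
    _ = trace M := by
      rw [hMS, ← Matrix.mul_assoc, nonsing_inv_mul _ ((isUnit_iff_isUnit_det _).1 hR.isUnit),
        Matrix.one_mul, trace_transpose]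

/-- Desroziers–Ivanov observation diagnosis: with optimal Kalman gain `K`,
`E[(y - H x_a)ᵀ R⁻¹ (y - H x_a)] = Tr(I - H K)`, i.e.
`E[2 J_o(x_a)] = Tr(I - H K)`. -/
theorem expected_observation_cost_eq_trace_ImHK {n m : ℕ} {Ω : Type*}
    [MeasurableSpace Ω] (ℙ : Measure Ω) [IsProbabilityMeasure ℙ]
    (B : Matrix (Fin n) (Fin n) ℝ) (R : Matrix (Fin m) (Fin m) ℝ)
    (H : Matrix (Fin m) (Fin n) ℝ)
    (hB : B.PosDef) (hR : R.PosDef)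
    (K : Matrix (Fin n) (Fin m) ℝ)
    (hK : K = B * Hᵀ * (H * B * Hᵀ + R)⁻¹)
    (xt : Fin n → ℝ)
    (εb : Ω → (Fin n → ℝ)) (εy : Ω → (Fin m → ℝ))
    (hbb : ∀ i j, Integrable (fun ω => εb ω i * εb ω j) ℙ)
    (hyy : ∀ k l, Integrable (fun ω => εy ω k * εy ω l) ℙ)
    (hby : ∀ i k, Integrable (fun ω => εb ω i * εy ω k) ℙ)
    (hmb : ∀ i, ∫ ω, εb ω i ∂ℙ = 0)
    (hmy : ∀ k, ∫ ω, εy ω k ∂ℙ = 0)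
    (hBcov : ∀ i j, ∫ ω, εb ω i * εb ω j ∂ℙ = B i j)
    (hRcov : ∀ k l, ∫ ω, εy ω k * εy ω l ∂ℙ = R k l)
    (hcross : ∀ i k, ∫ ω, εb ω i * εy ω k ∂ℙ = 0)
    (xb : Ω → (Fin n → ℝ)) (hxb : ∀ ω, xb ω = xt + εb ω)
    (y : Ω → (Fin m → ℝ)) (hy : ∀ ω, y ω = H *ᵥ xt - εy ω)
    (xa : Ω → (Fin n → ℝ))
    (hxa : ∀ ω, xa ω = xb ω + K *ᵥ (y ω - H *ᵥ xb ω)) :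
    ∫ ω, (y ω - H *ᵥ xa ω) ⬝ᵥ R⁻¹ *ᵥ (y ω - H *ᵥ xa ω) ∂ℙ
      = ((1 : Matrix (Fin m) (Fin m) ℝ) - H * K).trace :=
  expected_observation_cost_eq_trace_ImHK_general ℙ B R H hB hR K hK xt εb εy hbb hyy hby hBcov
    hRcov hcross xb hxb y hy xa hxa
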